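/- arXiv:2211.09803 — 7 statements merged into one kernel-verified Lean document; each statement's English description precedes it below -/
import Mathlib

section
/- If V is an irreducible unitary projective representation of a finite abelian group G with maximally non-commutative factor set ω, then Tr[V_g] = δ_{g,e} · √|G|; in particular the character of V vanishes on all nontrivial group elements. -/
open Matrix

/-- If V is an irreducible unitary projective representation of a
finite abelian group G with maximally non-commutative factor set ω (so that
dim V = √|G|), then Tr[V_g] = δ_{g,0}·√|G|. -/
theorem trace_delta_mnc {G : Type*} [AddCommGroup G] [Fintype G] [DecidableEq G] {n : ℕ}
    (hn : n ^ 2 = Fintype.card G)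
    (ω : G → G → ℂ)
    (hcoc : ∀ g₁ g₂ g₃ : G, ω g₁ g₂ * ω (g₁ + g₂) g₃ = ω g₂ g₃ * ω g₁ (g₂ + g₃))
    (hunit : ∀ g h, ω g h * star (ω g h) = 1)
    (hMNC : ∀ g : G, (∀ h, ω g h = ω h g) → g = 0)
    (V : G → Matrix (Fin n) (Fin n) ℂ)
    (hrep : ∀ g h, V g * V h = ω g h • V (g + h))
    (hV0 : V 0 = 1)
    (hunitary : ∀ g, V g * (V g)ᴴ = 1 ∧ (V g)ᴴ * V g = 1)
    (hirr : ∀ F : Matrix (Fin n) (Fin n) ℂ,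
      (∀ g, V g * F = F * V g) → ∃ c : ℂ, F = c • (1 : Matrix (Fin n) (Fin n) ℂ)) :
    ∀ g : G, (V g).trace =
      if g = 0 then ((Real.sqrt (Fintype.card G) : ℝ) : ℂ) else 0 := by
  intro g
  by_cases hg : g = 0
  · subst hg
    rw [if_pos rfl, hV0, trace_one, ← hn]
    push_cast
    rw [Real.sqrt_sq (by positivity)]
    simp
  · rw [if_neg hg]
    obtain ⟨h, hne⟩ := not_forall.mp (fun H => hg (hMNC g H))
    have hω : ω g h ≠ 0 := by
      intro h0
      have := hunit g h
      rw [h0] at this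
      simp at this
    set c : ℂ := ω h g * (ω g h)⁻¹ with hc
    have hc1 : c ≠ 1 := by
      intro h1
      apply hne
      field_simp [hc] at h1
      rw [hc, mul_inv_eq_one₀ hω] at h1
      exact h1.symm
    have key : V h * V g = c • (V g * V h) := by
      rw [hrep, hrep, add_comm h g, smul_smul, hc, mul_assoc,
        inv_mul_cancel₀ hω, mul_one]
    have e1 : V h * V g * (V h)ᴴ = c • V g := by
      rw [key, smul_mul_assoc, mul_assoc, (hunitary h).1, mul_one]
    have e2 : (V h * V g * (V h)ᴴ).trace = (V g).trace := by
      rw [mul_assoc, trace_mul_comm, mul_assoc, (hunitary h).2, mul_one]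
    rw [e1, trace_smul, smul_eq_mul] at e2
    have : (c - 1) * (V g).trace = 0 := by ring_nf; linear_combination e2
    rcases mul_eq_zero.mp this with h' | h'
    · exact absurd (sub_eq_zero.mp h') hc1
    · exact h'
end

section
/- A maximally non-commutative factor set on a finite abelian group G exists only if G is a square, i.e. G ≅ G' × G' for some finite abelian group G'. -/
open AddSubgroup

universe u

private lemma square_of_prod_equiv {G : Type*} [AddCommGroup G] {P : Type*} [AddCommGroup P]
    (e : G ≃+ P × P) : ∃ H : AddSubgroup G, Nonempty (G ≃+ H × H) := by
  let f : P →+ G := e.symm.toAddMonoidHom.comp (AddMonoidHom.inl P P)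
  have hf : Function.Injective f := by
    intro a b hab
    have := e.symm.injective hab
    simpa [Prod.ext_iff] using this
  exact ⟨f.range, ⟨e.trans ((AddMonoidHom.ofInjective hf).prodCongr (AddMonoidHom.ofInjective hf))⟩⟩


private lemma mnc_aux : ∀ (n : ℕ) (G : Type u) [AddCommGroup G] [Fintype G],
    Fintype.card G = n → ∀ (l : G → G → ℂˣ),
    (∀ g g' h : G, l (g + g') h = l g h * l g' h) →
    (∀ g h h' : G, l g (h + h') = l g h * l g h') →
    (∀ g : G, l g g = 1) →
    (∀ g : G, (∀ h, l g h = 1) → g = 0) →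
    ∃ H : AddSubgroup G, Nonempty (G ≃+ H × H) := by
  intro n
  induction n using Nat.strong_induction_on with
  | _ n ih =>
  intro G _ _ hcard l h1 h2 halt hnd
  -- basic pairing lemmas
  have hz1 : ∀ h : G, l 0 h = 1 := by
    intro h
    have := h1 0 0 h
    rw [add_zero] at this
    exact (left_eq_mul.mp this)
  have hz2 : ∀ g : G, l g 0 = 1 := by
    intro g
    have := h2 g 0 0
    rw [add_zero] at this
    exact (left_eq_mul.mp this)
  have hneg1 : ∀ g h : G, l (-g) h = (l g h)⁻¹ := by
    intro g h
    have := h1 g (-g) h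
    rw [add_neg_cancel, hz1] at this
    exact (eq_inv_of_mul_eq_one_right this.symm)
  have hneg2 : ∀ g h : G, l g (-h) = (l g h)⁻¹ := by
    intro g h
    have := h2 g h (-h)
    rw [add_neg_cancel, hz2] at this
    exact (eq_inv_of_mul_eq_one_right this.symm)
  have hsmul1 : ∀ (k : ℕ) (g h : G), l (k • g) h = l g h ^ k := by
    intro k g h
    induction k with
    | zero => simpa using hz1 h
    | succ m hm => rw [succ_nsmul, h1, hm, pow_succ]
  have hsmul2 : ∀ (k : ℕ) (g h : G), l g (k • h) = l g h ^ k := by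
    intro k g h
    induction k with
    | zero => simpa using hz2 g
    | succ m hm => rw [succ_nsmul, h2, hm, pow_succ]
  have hzsmul1 : ∀ (a : ℤ) (g h : G), l (a • g) h = l g h ^ a := by
    intro a g h
    cases a with
    | ofNat k => rw [Int.ofNat_eq_coe, natCast_zsmul, hsmul1, zpow_natCast]
    | negSucc k => rw [negSucc_zsmul, zpow_negSucc, hneg1, hsmul1]
  have hzsmul2 : ∀ (a : ℤ) (g h : G), l g (a • h) = l g h ^ a := by
    intro a g h
    cases a with
    | ofNat k => rw [Int.ofNat_eq_coe, natCast_zsmul, hsmul2, zpow_natCast]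
    | negSucc k => rw [negSucc_zsmul, zpow_negSucc, hneg2, hsmul2]
  have hskew : ∀ g h : G, l h g = (l g h)⁻¹ := by
    intro g h
    have := halt (g + h)
    rw [h1, h2, h2, halt, halt, one_mul, mul_one] at this
    exact (inv_eq_of_mul_eq_one_right this).symm
  -- trivial case
  by_cases hG : ∀ g : G, g = 0
  · haveI : Unique G := ⟨⟨0⟩, hG⟩
    haveI : Unique ((⊥ : AddSubgroup G) × (⊥ : AddSubgroup G)) :=
      ⟨⟨default⟩, fun a => Prod.ext (Subsingleton.elim _ _) (Subsingleton.elim _ _)⟩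
    exact ⟨⊥, ⟨AddEquiv.ofUnique⟩⟩
  push_neg at hG
  obtain ⟨x0, hx0⟩ := hG
  -- exponent and an element of maximal order
  obtain ⟨x, hx⟩ := AddMonoid.exists_addOrderOf_eq_exponent
    (AddMonoid.ExponentExists.of_finite (G := G))
  set n0 := AddMonoid.exponent G with hn0def
  have hn0pos : 0 < n0 := AddMonoid.ExponentExists.of_finite.exponent_pos
  have hn0ne1 : n0 ≠ 1 := by
    intro h
    apply hx0
    have := AddMonoid.exponent_nsmul_eq_zero (G := G) x0
    rwa [← hn0def, h, one_nsmul] at this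
  have hxne : x ≠ 0 := by
    intro h
    rw [h, addOrderOf_zero] at hx
    exact hn0ne1 hx.symm
  have hn0smul : ∀ g : G, n0 • g = 0 := fun g => AddMonoid.exponent_nsmul_eq_zero g
  -- the character h ↦ l x h, its image is a finite subgroup of ℂˣ, hence cyclic
  let φ : Multiplicative G →* ℂˣ := MonoidHom.mk' (fun h => l x h.toAdd)
    (fun a b => h2 x _ _)
  haveI : Finite (φ.range) := Set.Finite.to_subtype (Set.finite_range φ)
  obtain ⟨⟨ζ, hζmem⟩, hζgen⟩ := IsCyclic.exists_generator (α := φ.range)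
  obtain ⟨y', hy'⟩ := hζmem
  set y : G := Multiplicative.toAdd y' with hydef
  have hyval : l x y = ζ := hy'
  -- every value l x h is a power of ζ
  have hxpow : ∀ h : G, ∃ b : ℤ, l x h = ζ ^ b := by
    intro h
    have hmem : l x h ∈ φ.range := ⟨Multiplicative.ofAdd h, rfl⟩
    obtain ⟨b, hb⟩ := Subgroup.mem_zpowers_iff.mp (hζgen ⟨l x h, hmem⟩)
    exact ⟨b, by simpa [Subtype.ext_iff] using hb.symm⟩
  -- order of ζ is n0
  have hζn0 : ζ ^ n0 = 1 := by
    rw [← hyval, ← hsmul1, hn0smul, hz1]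
  have hζord : orderOf ζ = n0 := by
    have hdvd1 : orderOf ζ ∣ n0 := orderOf_dvd_of_pow_eq_one hζn0
    have hdvd2 : n0 ∣ orderOf ζ := by
      rw [← hx]
      apply addOrderOf_dvd_of_nsmul_eq_zero
      apply hnd
      intro h
      obtain ⟨b, hb⟩ := hxpow h
      rw [hsmul1, hb, ← zpow_natCast, ← zpow_mul, mul_comm, zpow_mul, zpow_natCast,
        pow_orderOf_eq_one, one_zpow]
    exact Nat.dvd_antisymm hdvd1 hdvd2
  have hζne : ∀ b : ℤ, ζ ^ b = 1 → (n0 : ℤ) ∣ b := by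
    intro b hb
    rw [← hζord]
    exact orderOf_dvd_iff_zpow_eq_one.mpr hb
  -- order of y is n0
  have hyord : addOrderOf y = n0 := by
    have h1' : n0 ∣ addOrderOf y := by
      rw [← hζord]
      apply orderOf_dvd_of_pow_eq_one
      rw [← hyval, ← hsmul2, addOrderOf_nsmul_eq_zero, hz2]
    have h2' : addOrderOf y ∣ n0 := AddMonoid.addOrder_dvd_exponent y
    exact Nat.dvd_antisymm h2' h1'
  -- every n0-th root of unity in ℂˣ is a power of ζ
  have hprim : IsPrimitiveRoot ζ n0 := by
    constructor
    · exact hζn0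
    · intro k hk
      rw [← hζord]
      exact orderOf_dvd_of_pow_eq_one hk
  have hroot : ∀ u : ℂˣ, u ^ n0 = 1 → ∃ k : ℕ, u = ζ ^ k := by
    intro u hu
    have hprimc : IsPrimitiveRoot (ζ : ℂ) n0 := IsPrimitiveRoot.coe_units_iff.mpr hprim
    have huc : (u : ℂ) ^ n0 = 1 := by
      rw [← Units.val_pow_eq_pow_val, hu, Units.val_one]
    obtain ⟨k, -, hk⟩ := hprimc.eq_pow_of_pow_eq_one huc
    exact ⟨k, by ext; rw [← hk, Units.val_pow_eq_pow_val]⟩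
  -- the orthogonal complement of x and y
  let B : AddSubgroup G :=
    { carrier := {h | l x h = 1 ∧ l y h = 1}
      zero_mem' := ⟨hz2 x, hz2 y⟩
      add_mem' := by
        rintro a b ⟨ha1, ha2⟩ ⟨hb1, hb2⟩
        exact ⟨by rw [h2, ha1, hb1, one_mul], by rw [h2, ha2, hb2, one_mul]⟩
      neg_mem' := by
        rintro a ⟨ha1, ha2⟩
        exact ⟨by rw [hneg2, ha1, inv_one], by rw [hneg2, ha2, inv_one]⟩ }
  have hBmem : ∀ h : G, h ∈ B ↔ l x h = 1 ∧ l y h = 1 := fun _ => Iff.rfl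
  -- value of l y x
  have hyx : l y x = ζ⁻¹ := by rw [hskew x y, hyval]
  have hsub2 : ∀ g h h' : G, l g (h - h') = l g h * (l g h')⁻¹ := by
    intro g h h'
    rw [sub_eq_add_neg, h2, hneg2]
  -- decomposition of an arbitrary element
  have hdecomp : ∀ g : G, ∃ (a b : ℤ), g - a • x - b • y ∈ B := by
    intro g
    obtain ⟨b, hb⟩ := hxpow g
    have hy0 : n0 • y = 0 := by
      rw [← hyord]; exact addOrderOf_nsmul_eq_zero y
    have hyg : (l y g) ^ n0 = 1 := by
      rw [← hsmul1, hy0, hz1]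
    obtain ⟨k, hk⟩ := hroot _ hyg
    refine ⟨-(k : ℤ), b, ?_, ?_⟩
    · rw [hsub2, hsub2, hb, hzsmul2, hzsmul2, halt, hyval]
      group
    · rw [hsub2, hsub2, hk, hzsmul2, hzsmul2, halt, hyx]
      group
  classical
  -- independence
  have hsum_zero : ∀ (a b : ℤ) (g' : G), g' ∈ B → a • x + b • y + g' = 0 →
      a • x = 0 ∧ b • y = 0 ∧ g' = 0 := by
    intro a b g' hg' hsum
    obtain ⟨hg'x, hg'y⟩ := (hBmem g').mp hg'
    have hbx : l x (a • x + b • y + g') = 1 := by rw [hsum, hz2]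
    rw [h2, h2, hzsmul2, hzsmul2, halt, one_zpow, one_mul, hyval, hg'x, mul_one] at hbx
    have hay : l y (a • x + b • y + g') = 1 := by rw [hsum, hz2]
    rw [h2, h2, hzsmul2, hzsmul2, halt, one_zpow, mul_one, hyx, hg'y, mul_one] at hay
    have hb0 : b • y = 0 := addOrderOf_dvd_iff_zsmul_eq_zero.mp
      (by rw [hyord]; exact hζne b hbx)
    have ha0 : a • x = 0 := by
      apply addOrderOf_dvd_iff_zsmul_eq_zero.mp
      rw [hx]
      have : ζ ^ (-a) = 1 := by rw [zpow_neg, ← inv_zpow]; exact hay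
      exact (dvd_neg).mp (hζne _ this)
    refine ⟨ha0, hb0, ?_⟩
    rw [ha0, hb0, zero_add, zero_add] at hsum
    exact hsum
  set Zx := zmultiples x with hZxdef
  set Zy := zmultiples y with hZydef
  let Φ : (↥Zx × ↥Zy) × ↥B →+ G := AddMonoidHom.mk'
    (fun p => (p.1.1 : G) + (p.1.2 : G) + (p.2 : G))
    (by intro p q
        simp only [Prod.fst_add, Prod.snd_add, AddSubgroup.coe_add]
        abel)
  have hΦbij : Function.Bijective Φ := by
    constructor
    · rw [injective_iff_map_eq_zero]
      rintro ⟨⟨⟨u, hu⟩, ⟨v, hv⟩⟩, ⟨w, hw⟩⟩ h0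
      obtain ⟨a, rfl⟩ := mem_zmultiples_iff.mp hu
      obtain ⟨b, rfl⟩ := mem_zmultiples_iff.mp hv
      have h0' : a • x + b • y + w = 0 := h0
      obtain ⟨ha, hb, hw0⟩ := hsum_zero a b w hw h0'
      exact Prod.ext (Prod.ext (Subtype.ext ha) (Subtype.ext hb)) (Subtype.ext hw0)
    · intro g
      obtain ⟨a, b, hg'⟩ := hdecomp g
      refine ⟨⟨⟨⟨a • x, mem_zmultiples_iff.mpr ⟨a, rfl⟩⟩,
        ⟨b • y, mem_zmultiples_iff.mpr ⟨b, rfl⟩⟩⟩, ⟨g - a • x - b • y, hg'⟩⟩, ?_⟩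
      show a • x + b • y + (g - a • x - b • y) = g
      abel
  let e1 : G ≃+ (↥Zx × ↥Zy) × ↥B := (AddEquiv.ofBijective Φ hΦbij).symm
  -- the induced pairing on B
  let lB : ↥B → ↥B → ℂˣ := fun u v => l u v
  have lB1 : ∀ u u' v : ↥B, lB (u + u') v = lB u v * lB u' v := fun u u' v => h1 u u' v
  have lB2 : ∀ u v v' : ↥B, lB u (v + v') = lB u v * lB u v' := fun u v v' => h2 u v v'
  have lBalt : ∀ u : ↥B, lB u u = 1 := fun u => halt u
  have lBnd : ∀ u : ↥B, (∀ v : ↥B, lB u v = 1) → u = 0 := by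
    intro u hu
    have hux : l (u : G) x = 1 := by rw [hskew x (u : G), ((hBmem u).mp u.2).1, inv_one]
    have huy : l (u : G) y = 1 := by rw [hskew y (u : G), ((hBmem u).mp u.2).2, inv_one]
    have hu0 : (u : G) = 0 := by
      apply hnd
      intro h
      obtain ⟨a, b, hg'⟩ := hdecomp h
      have hrw : h = a • x + b • y + (h - a • x - b • y) := by abel
      rw [hrw, h2, h2, hzsmul2, hzsmul2, hux, huy, one_zpow, one_zpow, one_mul, one_mul]
      exact hu ⟨_, hg'⟩
    exact Subtype.ext hu0
  -- cardinalities
  have hcardG : n = Fintype.card ↥Zx * Fintype.card ↥Zy * Fintype.card ↥B := by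
    rw [← hcard, Fintype.card_congr e1.toEquiv, Fintype.card_prod, Fintype.card_prod]
  have hcZx : Fintype.card ↥Zx = n0 := by
    rw [← Nat.card_eq_fintype_card, Nat.card_zmultiples, hx]
  have hcardBlt : Fintype.card ↥B < n := by
    have hBpos : 0 < Fintype.card ↥B := Fintype.card_pos
    have hZypos : 0 < Fintype.card ↥Zy := Fintype.card_pos
    have h2n0 : 2 ≤ n0 := by omega
    rw [hcZx] at hcardG
    calc Fintype.card ↥B < 2 * Fintype.card ↥B := by omega
      _ = (2 * 1) * Fintype.card ↥B := by ring
      _ ≤ (n0 * Fintype.card ↥Zy) * Fintype.card ↥B :=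
          Nat.mul_le_mul_right _ (Nat.mul_le_mul h2n0 hZypos)
      _ = n := hcardG.symm
  obtain ⟨K, ⟨eK⟩⟩ := ih (Fintype.card ↥B) hcardBlt ↥B rfl lB lB1 lB2 lBalt lBnd
  -- the two cyclic factors are isomorphic
  have hZcyc : ∀ g : G, IsAddCyclic ↥(zmultiples g) := by
    intro g
    refine ⟨⟨g, mem_zmultiples g⟩, ?_⟩
    rintro ⟨z, hz⟩
    obtain ⟨k, hk⟩ := mem_zmultiples_iff.mp hz
    exact mem_zmultiples_iff.mpr ⟨k, Subtype.ext (by simpa using hk)⟩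
  haveI := hZcyc x
  haveI := hZcyc y
  have hcyc : ↥Zx ≃+ ↥Zy := addEquivOfAddCyclicCardEq (by
    rw [hZxdef, hZydef, Nat.card_zmultiples, Nat.card_zmultiples, hx, hyord])
  -- assemble the square
  let e2 : G ≃+ (↥Zx × ↥Zy) × (↥K × ↥K) := e1.trans ((AddEquiv.refl _).prodCongr eK)
  let e3 : G ≃+ (↥Zx × ↥K) × (↥Zy × ↥K) := e2.trans (AddEquiv.prodProdProdComm _ _ _ _)
  let e4 : G ≃+ (↥Zx × ↥K) × (↥Zx × ↥K) :=
    e3.trans ((AddEquiv.refl _).prodCongr (hcyc.symm.prodCongr (AddEquiv.refl _)))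
  exact square_of_prod_equiv e4

/-- A maximally non-commutative factor set on a finite abelian
group G exists only if G is a square: G ≅ G' × G' for some finite abelian
group G'. -/
theorem mnc_implies_square {G : Type*} [AddCommGroup G] [Fintype G]
    (ω : G → G → ℂ)
    (hcoc : ∀ g₁ g₂ g₃ : G, ω g₁ g₂ * ω (g₁ + g₂) g₃ = ω g₂ g₃ * ω g₁ (g₂ + g₃))
    (hunit : ∀ g h, ω g h * star (ω g h) = 1)
    (hMNC : ∀ g : G, (∀ h, ω g h = ω h g) → g = 0) :
    ∃ H : AddSubgroup G, Nonempty (G ≃+ H × H) := by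
  have hne : ∀ g h : G, ω g h ≠ 0 := fun g h => left_ne_zero_of_mul_eq_one (hunit g h)
  -- the commutator pairing
  let l : G → G → ℂˣ := fun g h => Units.mk0 (ω g h / ω h g)
    (div_ne_zero (hne g h) (hne h g))
  have hlval : ∀ g h : G, (l g h : ℂ) = ω g h / ω h g := fun g h => rfl
  have key : ∀ g g' h : G, ω (g + g') h * (ω h g * ω h g') =
      (ω g h * ω g' h) * ω h (g + g') := by
    intro g g' h
    have e1 := hcoc g g' h
    have e2 := hcoc g h g'
    have e3 := hcoc h g g'
    rw [add_comm h g'] at e2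
    rw [add_comm h g] at e3
    apply mul_left_cancel₀ (hne g g')
    linear_combination (ω h g * ω h g') * e1 - (ω g' h * ω h g) * e2 +
      (ω g' h * ω g h) * e3
  have h1 : ∀ g g' h : G, l (g + g') h = l g h * l g' h := by
    intro g g' h
    ext
    rw [Units.val_mul, hlval, hlval, hlval, div_mul_div_comm,
      div_eq_div_iff (hne _ _) (mul_ne_zero (hne _ _) (hne _ _))]
    exact key g g' h
  have hskew : ∀ g h : G, l g h * l h g = 1 := by
    intro g h
    ext
    rw [Units.val_mul, hlval, hlval, Units.val_one, div_mul_div_comm,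
      div_eq_one_iff_eq (mul_ne_zero (hne _ _) (hne _ _))]
    ring
  have hinv : ∀ a b : G, l a b = (l b a)⁻¹ := fun a b =>
    eq_inv_of_mul_eq_one_left (hskew a b)
  have h2 : ∀ g h h' : G, l g (h + h') = l g h * l g h' := by
    intro g h h'
    rw [hinv g (h + h'), h1, mul_inv, ← hinv, ← hinv]
  have halt : ∀ g : G, l g g = 1 := by
    intro g
    ext
    rw [hlval, Units.val_one, div_self (hne g g)]
  have hnd : ∀ g : G, (∀ h, l g h = 1) → g = 0 := by
    intro g hg
    apply hMNC
    intro h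
    have := hg h
    rw [Units.ext_iff, hlval, Units.val_one, div_eq_one_iff_eq (hne h g)] at this
    exact this
  exact mnc_aux (Fintype.card G) G rfl l h1 h2 halt hnd
end

section
/- The MPS tensor A_ω with A^g = V^†_{Γ_ω^{-1}(g)} is a perfect tensor: (i) Tr[(A^g)^† A^h] = √|G| · δ_{g,h}, and (ii) Σ_{g∈G} [A^g]_{ij}[A^g]^*_{kl} = √|G| · δ_{ik} δ_{jl}. -/
open Matrix
open scoped BigOperators

/-- The canonical MPS tensor A^g := V†_{Γ⁻¹(g)}. -/
def mpsTensor {G : Type*} {n : ℕ} (V : G → Matrix (Fin n) (Fin n) ℂ)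
    (Γ : G ≃ G) (g : G) : Matrix (Fin n) (Fin n) ℂ :=
  (V (Γ.symm g))ᴴ

/-- The MPS tensor A_ω with A^g = V†_{Γ_ω⁻¹(g)} is a perfect
tensor: (i) Tr[(A^g)† A^h] = √|G|·δ_{g,h}, and
(ii) Σ_g [A^g]_{ij}[A^g]*_{kl} = √|G|·δ_{ik}δ_{jl}. -/
theorem canonical_mps_perfect {G : Type*} [AddCommGroup G] [Fintype G]
    [DecidableEq G] {n : ℕ} (hn : n ^ 2 = Fintype.card G)
    (ω : G → G → ℂ)
    (hcoc : ∀ g₁ g₂ g₃ : G, ω g₁ g₂ * ω (g₁ + g₂) g₃ = ω g₂ g₃ * ω g₁ (g₂ + g₃))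
    (hunit : ∀ g h, ω g h * star (ω g h) = 1)
    (hMNC : ∀ g : G, (∀ h, ω g h = ω h g) → g = 0)
    (V : G → Matrix (Fin n) (Fin n) ℂ)
    (hrep : ∀ g h, V g * V h = ω g h • V (g + h))
    (hV0 : V 0 = 1)
    (hunitary : ∀ g, V g * (V g)ᴴ = 1 ∧ (V g)ᴴ * V g = 1)
    (hirr : ∀ F : Matrix (Fin n) (Fin n) ℂ,
      (∀ g, V g * F = F * V g) → ∃ c : ℂ, F = c • (1 : Matrix (Fin n) (Fin n) ℂ))
    (Γ : G ≃ G) :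
    (∀ g h : G,
      ((mpsTensor V Γ g)ᴴ * mpsTensor V Γ h).trace =
        if g = h then ((Real.sqrt (Fintype.card G) : ℝ) : ℂ) else 0) ∧
    (∀ i j k l : Fin n,
      ∑ g : G, mpsTensor V Γ g i j * star (mpsTensor V Γ g k l) =
        if i = k ∧ j = l then ((Real.sqrt (Fintype.card G) : ℝ) : ℂ) else 0) := by
  -- basic facts
  have hω0 : ∀ g h : G, ω g h ≠ 0 := by
    intro g h h0
    have := hunit g h
    rw [h0, zero_mul] at this
    exact zero_ne_one this
  have hnpos : 0 < n := by
    rcases Nat.eq_zero_or_pos n with h | h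
    · exfalso
      have : (0 : ℕ) = Fintype.card G := by rw [← hn, h]; ring
      have hc : 0 < Fintype.card G := Fintype.card_pos
      omega
    · exact h
  have hnne : (n : ℂ) ≠ 0 := Nat.cast_ne_zero.mpr hnpos.ne'
  have hsqrt : ((Real.sqrt (Fintype.card G) : ℝ) : ℂ) = (n : ℂ) := by
    rw [← hn, show ((n ^ 2 : ℕ) : ℝ) = (n : ℝ) ^ 2 by push_cast; ring,
      Real.sqrt_sq (Nat.cast_nonneg n)]
    norm_cast
  -- trace of V g vanishes for g ≠ 0
  have htr : ∀ g : G, g ≠ 0 → (V g).trace = 0 := by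
    intro g hg
    by_contra ht
    refine hg (hMNC g ?_)
    intro h
    have key : V h * V g * (V h)ᴴ = (ω h g * (ω g h)⁻¹) • V g := by
      have h1 : V h * V g = ω h g • V (h + g) := hrep h g
      have h2 : V g * V h = ω g h • V (g + h) := hrep g h
      have h3 : V (h + g) = (ω g h)⁻¹ • (V g * V h) := by
        rw [h2, smul_smul, inv_mul_cancel₀ (hω0 g h), one_smul, add_comm]
      rw [h1, h3, smul_smul, smul_mul_assoc, mul_assoc, (hunitary h).1, mul_one]
    have htr2 : (V h * V g * (V h)ᴴ).trace = (V g).trace := by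
      rw [Matrix.trace_mul_cycle, (hunitary h).2, one_mul]
    rw [key, Matrix.trace_smul, smul_eq_mul] at htr2
    have h1 : ω h g * (ω g h)⁻¹ = 1 := by
      have := htr2.trans (one_mul ((V g).trace)).symm
      exact mul_right_cancel₀ ht this
    exact ((mul_inv_eq_one₀ (hω0 g h)).mp h1).symm
  -- Schur orthogonality
  have schur : ∀ b d a c : Fin n,
      ∑ g : G, V g a b * star (V g c d) =
        if a = c ∧ b = d then (n : ℂ) else 0 := by
    intro b d a c
    set E : Matrix (Fin n) (Fin n) ℂ := Matrix.single b d 1 with hE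
    set F : Matrix (Fin n) (Fin n) ℂ := ∑ g : G, V g * E * (V g)ᴴ with hF
    have hinv : ∀ h : G, V h * F * (V h)ᴴ = F := by
      intro h
      have : V h * F * (V h)ᴴ = ∑ g : G, V h * (V g * E * (V g)ᴴ) * (V h)ᴴ := by
        rw [hF, Finset.mul_sum, Finset.sum_mul]
      rw [this]
      have hterm : ∀ g : G,
          V h * (V g * E * (V g)ᴴ) * (V h)ᴴ = V (h + g) * E * (V (h + g))ᴴ := by
        intro g
        have h1 : V h * V g = ω h g • V (h + g) := hrep h g
        calc V h * (V g * E * (V g)ᴴ) * (V h)ᴴ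
            = (V h * V g) * E * ((V h * V g))ᴴ := by
              rw [Matrix.conjTranspose_mul]; noncomm_ring
          _ = V (h + g) * E * (V (h + g))ᴴ := by
              rw [h1, Matrix.conjTranspose_smul]
              simp only [smul_mul_assoc, mul_smul_comm, smul_smul]
              first
              | rw [hunit h g, one_smul]
              | rw [mul_comm, hunit h g, one_smul]
      rw [Finset.sum_congr rfl fun g _ => hterm g]
      rw [hF]
      exact Fintype.sum_equiv (Equiv.addLeft h) _ _ (fun g => rfl)
    have hcomm : ∀ h : G, V h * F = F * V h := by
      intro h
      calc V h * F = V h * F * ((V h)ᴴ * V h) := by rw [(hunitary h).2, mul_one]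
        _ = (V h * F * (V h)ᴴ) * V h := by noncomm_ring
        _ = F * V h := by rw [hinv h]
    obtain ⟨cc, hcc⟩ := hirr F hcomm
    -- trace of F
    have htrE : E.trace = if b = d then (1 : ℂ) else 0 := by
      rw [Matrix.trace]
      simp only [hE, Matrix.diag_apply, Matrix.single, Matrix.of_apply,
        ite_and]
      rw [Finset.sum_ite_eq]
      simp [eq_comm]
    have htrF : F.trace = (Fintype.card G : ℂ) * E.trace := by
      rw [hF, Matrix.trace_sum]
      have : ∀ g : G, (V g * E * (V g)ᴴ).trace = E.trace := by
        intro g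
        rw [Matrix.trace_mul_cycle, (hunitary g).2, one_mul]
      rw [Finset.sum_congr rfl fun g _ => this g]
      simp [Finset.sum_const, nsmul_eq_mul]
    have htrF2 : F.trace = cc * n := by
      rw [hcc, Matrix.trace_smul, Matrix.trace_one, smul_eq_mul]
      simp [Fintype.card_fin]
    have hccval : cc = (n : ℂ) * (if b = d then (1 : ℂ) else 0) := by
      have h1 : cc * n = (Fintype.card G : ℂ) * E.trace := by rw [← htrF2, htrF]
      have h2 : (Fintype.card G : ℂ) = (n : ℂ) * n := by
        rw [← hn]; push_cast; ring
      rw [h2, htrE, mul_assoc, mul_comm ((n:ℂ)) _] at h1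
      have := mul_right_cancel₀ hnne h1
      rw [this]
    -- entrywise
    have hME : ∀ (g : G) (y : Fin n),
        (V g * E) a y = if d = y then V g a b else 0 := by
      intro g y
      rw [Matrix.mul_apply]
      simp only [hE, Matrix.single, Matrix.of_apply, mul_ite, mul_one,
        mul_zero, ite_and]
      rw [Finset.sum_ite_eq]
      simp
    have hterm2 : ∀ g : G, (V g * E * (V g)ᴴ) a c = V g a b * star (V g c d) := by
      intro g
      rw [Matrix.mul_apply]
      simp only [Matrix.conjTranspose_apply]
      calc ∑ y, (V g * E) a y * star (V g c y)
          = ∑ y, (if d = y then V g a b else 0) * star (V g c y) :=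
            Finset.sum_congr rfl fun y _ => by rw [hME g y]
        _ = V g a b * star (V g c d) := by
            simp only [ite_mul, zero_mul]
            rw [Finset.sum_ite_eq]
            simp
    have hentry : F a c = ∑ g : G, V g a b * star (V g c d) := by
      rw [hF, Matrix.sum_apply]
      exact Finset.sum_congr rfl fun g _ => hterm2 g
    have hFval : F a c = cc * (if a = c then (1:ℂ) else 0) := by
      rw [hcc]
      simp [Matrix.one_apply]
    rw [← hentry, hFval, hccval]
    by_cases hac : a = c <;> by_cases hbd : b = d <;> simp [hac, hbd]
  constructor
  · -- part (i)
    intro g h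
    set a := Γ.symm g with ha
    set b := Γ.symm h with hb
    have hmps : (mpsTensor V Γ g)ᴴ * mpsTensor V Γ h = V a * (V b)ᴴ := by
      rw [mpsTensor, mpsTensor, Matrix.conjTranspose_conjTranspose]
    rw [hmps]
    by_cases hgh : g = h
    · subst hgh
      rw [(hunitary a).1, if_pos rfl, Matrix.trace_one, hsqrt]
      simp [Fintype.card_fin]
    · rw [if_neg hgh]
      have hab : a ≠ b := fun hc => hgh (by
        have := congrArg Γ hc
        simpa [ha, hb] using this)
      have hsub : a - b ≠ 0 := sub_ne_zero_of_ne hab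
      have hVa : V a = (ω (a - b) b)⁻¹ • (V (a - b) * V b) := by
        rw [hrep (a - b) b, smul_smul, inv_mul_cancel₀ (hω0 (a-b) b), one_smul,
          sub_add_cancel]
      rw [hVa, smul_mul_assoc, mul_assoc, (hunitary b).1, mul_one,
        Matrix.trace_smul, htr _ hsub, smul_zero]
  · -- part (ii)
    intro i j k l
    have hre : ∑ g : G, mpsTensor V Γ g i j * star (mpsTensor V Γ g k l) =
        ∑ g : G, star (V g j i) * V g l k := by
      refine Fintype.sum_equiv Γ.symm _ _ (fun g => ?_)
      rw [mpsTensor, Matrix.conjTranspose_apply, Matrix.conjTranspose_apply,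
        star_star]
    rw [hre]
    have : ∑ g : G, star (V g j i) * V g l k =
        star (∑ g : G, V g j i * star (V g l k)) := by
      rw [star_sum]
      congr 1
      ext g
      rw [star_mul', star_star]
    rw [this, schur i k j l]
    by_cases hik : i = k <;> by_cases hjl : j = l <;>
      simp [hik, hjl, and_comm, hsqrt]
end

section
/- Symmetry fractionalization of the canonical MPS tensor: with R_h = Σ_{g∈G} χ_h(g)|g⟩⟨g| the regular-representation symmetry action and A_ω = Σ_g |g⟩ V^†_{Γ_ω^{-1}(g)}, one has R_h A_ω = A_ω (V_h^† ⊗ V_h), meaning Σ_g χ_h(g)|g⟩ V^†_{Γ_ω^{-1}(g)} = Σ_g |g⟩ V_h^† V^†_{Γ_ω^{-1}(g)} V_h. -/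
open Matrix

/-- Symmetry fractionalization of the canonical MPS tensor:
with R_h = Σ_g χ_h(g)|g⟩⟨g| and A_ω = Σ_g |g⟩ V†_{Γ_ω⁻¹(g)}, the identity
R_h A_ω = A_ω (V_h† ⊗ V_h) holds, i.e. componentwise
χ_h(g) · V†_{Γ_ω⁻¹(g)} = V_h† V†_{Γ_ω⁻¹(g)} V_h, where the isomorphism Γ_ω is
characterized by λ_ω(h, Γ_ω⁻¹(g)) = χ_h(g). -/
theorem symmetry_fractionalization {G : Type*} [AddCommGroup G] [Fintype G]
    {n : ℕ} (ω : G → G → ℂ)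
    (hne : ∀ g h, ω g h ≠ 0)
    (hunit : ∀ g h, ω g h * star (ω g h) = 1)
    (V : G → Matrix (Fin n) (Fin n) ℂ)
    (hrep : ∀ g h, V g * V h = ω g h • V (g + h))
    (hunitary : ∀ g, V g * (V g)ᴴ = 1 ∧ (V g)ᴴ * V g = 1)
    (χ : G → G → ℂ) (Γ : G ≃ G)
    (hχΓ : ∀ h g : G, ω h (Γ.symm g) / ω (Γ.symm g) h = χ h g) :
    ∀ h g : G,
      χ h g • (V (Γ.symm g))ᴴ = (V h)ᴴ * ((V (Γ.symm g))ᴴ * V h) := by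
  intro h g
  set k := Γ.symm g with hk
  have hsω : ∀ a b : G, star (ω a b) = (ω a b)⁻¹ := fun a b =>
    eq_inv_of_mul_eq_one_left (by rw [mul_comm]; exact hunit a b)
  -- conjugate transpose of the cocycle relation
  have e1 : (V k)ᴴ * (V h)ᴴ = star (ω h k) • (V (h + k))ᴴ := by
    rw [← conjTranspose_mul, hrep, conjTranspose_smul]
  have e2 : (V h)ᴴ * (V k)ᴴ = star (ω k h) • (V (h + k))ᴴ := by
    rw [← conjTranspose_mul, hrep, conjTranspose_smul, add_comm]
  -- (V (h+k))ᴴ * V h = ω h k • (V k)ᴴ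
  have e3 : (V (h + k))ᴴ * V h = ω h k • (V k)ᴴ := by
    have := congrArg (· * V h) e1
    simp only [Matrix.mul_assoc, (hunitary h).2, Matrix.mul_one,
      Matrix.smul_mul] at this
    rw [this, smul_smul, hunit, one_smul]
  symm
  calc (V h)ᴴ * ((V k)ᴴ * V h)
      = ((V h)ᴴ * (V k)ᴴ) * V h := by rw [Matrix.mul_assoc]
    _ = star (ω k h) • ((V (h + k))ᴴ * V h) := by rw [e2, Matrix.smul_mul]
    _ = (star (ω k h) * ω h k) • (V k)ᴴ := by rw [e3, smul_smul]
    _ = χ h g • (V k)ᴴ := by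
        rw [hsω, ← hχΓ h g, ← hk, div_eq_mul_inv, mul_comm]
end

section
/- Monotone growth of the gap under iid ternary majority vote: let p be a probability distribution on a finite set G with |G| ≥ 2, and let p'(g) := p(g) + p(g)² − p(g)·Σ_{h∈G} p(h)². If g₁ and g₂ are elements with the largest and second-largest probabilities and δ := p(g₁) − p(g₂) ≥ 0, then p'(g₁) − p'(g₂) − δ = p(g₁)² − p(g₂)² − δ·Σ_h p(h)² ≥ δ·p(g₂) ≥ 0; hence the gap is non-decreasing under one round of majority vote. -/
open scoped BigOperators

/-- One round of iid ternary majority vote: the new single-site marginal is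
p'(g) = p(g) + p(g)² − p(g)·Σ_h p(h)². -/
def majUpdate {G : Type*} [Fintype G] (p : G → ℝ) : G → ℝ :=
  fun g => p g + p g ^ 2 - p g * ∑ h : G, p h ^ 2

/-- monotone growth of the gap under iid ternary majority vote.
If g₁, g₂ carry the largest and second-largest probabilities and
δ = p(g₁) − p(g₂), then
p'(g₁) − p'(g₂) − δ = p(g₁)² − p(g₂)² − δ·Σ_h p(h)² ≥ δ·p(g₂) ≥ 0,
so the gap is non-decreasing. -/
theorem majority_vote_gap_monotone {G : Type*} [Fintype G]
    (p : G → ℝ) (hp : ∀ g, 0 ≤ p g) (hsum : ∑ g : G, p g = 1)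
    (g₁ g₂ : G) (hne : g₁ ≠ g₂)
    (hmax : ∀ g, p g ≤ p g₁)
    (hsec : ∀ g, g ≠ g₁ → p g ≤ p g₂) :
    (majUpdate p g₁ - majUpdate p g₂ - (p g₁ - p g₂) =
      p g₁ ^ 2 - p g₂ ^ 2 - (p g₁ - p g₂) * ∑ h : G, p h ^ 2) ∧
    ((p g₁ - p g₂) * p g₂ ≤
      p g₁ ^ 2 - p g₂ ^ 2 - (p g₁ - p g₂) * ∑ h : G, p h ^ 2) ∧
    (0 ≤ (p g₁ - p g₂) * p g₂) ∧
    (p g₁ - p g₂ ≤ majUpdate p g₁ - majUpdate p g₂) := by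
  have hd : 0 ≤ p g₁ - p g₂ := sub_nonneg.2 (hmax g₂)
  have hS : ∑ h : G, p h ^ 2 ≤ p g₁ := by
    calc ∑ h : G, p h ^ 2 ≤ ∑ h : G, p g₁ * p h := by
          apply Finset.sum_le_sum
          intro i _
          have := hmax i
          nlinarith [hp i]
      _ = p g₁ := by rw [← Finset.mul_sum, hsum, mul_one]
  refine ⟨by simp [majUpdate]; ring, ?_, mul_nonneg hd (hp g₂), ?_⟩
  · nlinarith
  · have h2 := hp g₂
    simp only [majUpdate]
    nlinarith
end

section
/- For the distribution p(g₁) = (1−δ)/|G| + δ and p(h) = (1−δ)/|G| for h ≠ g₁, one round of iid ternary majority vote gives a new gap δ' satisfying (δ' − δ)/δ = (1−δ)(1 + δ(|G|−1))/|G|; in particular δ' > δ for 0 < δ < 1, and δ = 1 is a fixed point. -/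
open scoped BigOperators

/-- for the distribution p(g₁) = (1−δ)/|G| + δ and
p(h) = (1−δ)/|G| for h ≠ g₁, one round of majority vote gives a new gap δ'
with δ' − δ = δ·(1−δ)(1 + δ(|G|−1))/|G|; in particular δ' > δ for 0 < δ < 1
and δ = 1 is a fixed point. -/
theorem uniform_excess_gap_flow {G : Type*} [Fintype G] [DecidableEq G]
    (hcard : 2 ≤ Fintype.card G) (g₁ : G) (δ : ℝ) (hδ0 : 0 ≤ δ) (hδ1 : δ ≤ 1) :
    let p : G → ℝ := fun g =>
      if g = g₁ then (1 - δ) / (Fintype.card G : ℝ) + δ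
      else (1 - δ) / (Fintype.card G : ℝ)
    ∀ h : G, h ≠ g₁ →
      (majUpdate p g₁ - majUpdate p h - δ =
        δ * ((1 - δ) * (1 + δ * ((Fintype.card G : ℝ) - 1)) /
          (Fintype.card G : ℝ))) ∧
      (0 < δ → δ < 1 → δ < majUpdate p g₁ - majUpdate p h) ∧
      (δ = 1 → majUpdate p g₁ - majUpdate p h = δ) := by
  intro p h hh
  have hn2 : (2:ℝ) ≤ (Fintype.card G : ℝ) := by exact_mod_cast hcard
  have hn0 : (0:ℝ) < (Fintype.card G : ℝ) := by linarith
  set n : ℝ := (Fintype.card G : ℝ) with hn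
  have hpg : p g₁ = (1-δ)/n + δ := if_pos rfl
  have hph : p h = (1-δ)/n := if_neg hh
  have hsum : ∑ x : G, p x ^ 2 = (n - 1) * ((1-δ)/n)^2 + ((1-δ)/n + δ)^2 := by
    rw [← Finset.add_sum_erase _ _ (Finset.mem_univ g₁), hpg]
    have hc : ∀ x ∈ Finset.univ.erase g₁, p x ^ 2 = ((1-δ)/n)^2 := by
      intro x hx
      rw [show p x = (1-δ)/n from if_neg (Finset.ne_of_mem_erase hx)]
    rw [Finset.sum_congr rfl hc, Finset.sum_const,
      Finset.card_erase_of_mem (Finset.mem_univ g₁), Finset.card_univ,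
      nsmul_eq_mul, Nat.cast_sub (by omega), Nat.cast_one]
    ring
  have key : majUpdate p g₁ - majUpdate p h - δ =
      δ * ((1 - δ) * (1 + δ * (n - 1)) / n) := by
    simp only [majUpdate, hpg, hph, hsum]
    field_simp
    ring
  refine ⟨key, ?_, ?_⟩
  · intro h1 h2
    have : 0 < δ * ((1 - δ) * (1 + δ * (n - 1)) / n) := by
      apply mul_pos h1
      apply div_pos _ hn0
      apply mul_pos (by linarith)
      nlinarith
    linarith
  · intro h1
    rw [h1] at key ⊢
    have h0 : (1:ℝ) * ((1 - 1) * (1 + 1 * (n - 1)) / n) = 0 := by ring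
    linarith [key]
end

section
/- Entangled-pair representation (MNC case): for a maximally non-commutative factor set ω on a finite abelian group G with irreducible projective representation V of dimension √|G|, the linear representation R_g := V_g^* ⊗ V_g on ℂ^{√|G|} ⊗ ℂ^{√|G|} is a genuine (non-projective) representation of G, and it is unitarily equivalent to the regular representation of G; in particular its eigenvalues for each g are exactly {χ_h(g) : h ∈ G}, each with multiplicity one, with eigenvectors v_h := (V_h^* ⊗ 1)|Γ⟩ where |Γ⟩ = |G'|^{-1/2} Σ_a |a⟩⊗|a⟩. -/
open Matrix
open scoped Kronecker BigOperators

/-- Entangled-pair representation (MNC case).  For a maximally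
non-commutative factor set ω on a finite abelian G with irreducible unitary
projective representation V of dimension √|G|, the operators
R_g := V_g^* ⊗ V_g form a genuine linear representation of G, the vectors
v_h := (V_h^* ⊗ 1)|Γ⟩ (with |Γ⟩ the normalized maximally entangled state) are
eigenvectors with eigenvalues λ_ω(h,g) = χ_h(Γ_ω(g)), and R is unitarily
equivalent to the regular representation of G. -/
theorem entangled_pair_representation {G : Type*} [AddCommGroup G] [Fintype G]
    [DecidableEq G] {n : ℕ} (hn : n ^ 2 = Fintype.card G)
    (ω : G → G → ℂ)
    (hcoc : ∀ g₁ g₂ g₃ : G, ω g₁ g₂ * ω (g₁ + g₂) g₃ = ω g₂ g₃ * ω g₁ (g₂ + g₃))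
    (hunit : ∀ g h, ω g h * star (ω g h) = 1)
    (hMNC : ∀ g : G, (∀ h, ω g h = ω h g) → g = 0)
    (V : G → Matrix (Fin n) (Fin n) ℂ)
    (hrep : ∀ g h, V g * V h = ω g h • V (g + h))
    (hV0 : V 0 = 1)
    (hunitary : ∀ g, V g * (V g)ᴴ = 1 ∧ (V g)ᴴ * V g = 1)
    (hirr : ∀ F : Matrix (Fin n) (Fin n) ℂ,
      (∀ g, V g * F = F * V g) → ∃ c : ℂ, F = c • (1 : Matrix (Fin n) (Fin n) ℂ)) :
    (∀ g h : G,
      (((V g).map (starRingEnd ℂ)) ⊗ₖ V g) * (((V h).map (starRingEnd ℂ)) ⊗ₖ V h) =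
        ((V (g + h)).map (starRingEnd ℂ)) ⊗ₖ V (g + h)) ∧
    (∀ g h : G,
      (((V g).map (starRingEnd ℂ)) ⊗ₖ V g) *ᵥ
          (fun p : Fin n × Fin n =>
            ((Real.sqrt n : ℝ) : ℂ)⁻¹ * starRingEnd ℂ (V h p.1 p.2)) =
        (ω h g / ω g h) •
          fun p : Fin n × Fin n =>
            ((Real.sqrt n : ℝ) : ℂ)⁻¹ * starRingEnd ℂ (V h p.1 p.2)) ∧
    (∃ U : Matrix (Fin n × Fin n) G ℂ,
      U * Uᴴ = 1 ∧ Uᴴ * U = 1 ∧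
      ∀ g : G, ((V g).map (starRingEnd ℂ)) ⊗ₖ V g =
        U * (Matrix.of fun a b : G => if a = b + g then (1 : ℂ) else 0) * Uᴴ) := by
  classical
  have hn0 : n ≠ 0 := by
    rintro rfl
    have := Fintype.card_pos (α := G)
    omega
  have hnC : (n : ℂ) ≠ 0 := Nat.cast_ne_zero.mpr hn0
  have hω0 : ∀ g h : G, ω g h ≠ 0 := by
    intro g h h0
    have := hunit g h
    rw [h0, zero_mul] at this
    exact one_ne_zero this.symm
  have hstar : ∀ g h : G, starRingEnd ℂ (ω g h) = (ω g h)⁻¹ := by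
    intro g h
    rw [starRingEnd_apply]
    exact eq_inv_of_mul_eq_one_right (hunit g h)
  -- Part 1
  have part1 : ∀ g h : G,
      (((V g).map (starRingEnd ℂ)) ⊗ₖ V g) * (((V h).map (starRingEnd ℂ)) ⊗ₖ V h) =
        ((V (g + h)).map (starRingEnd ℂ)) ⊗ₖ V (g + h) := by
    intro g h
    have hmapsmul : (ω g h • V (g + h)).map (starRingEnd ℂ) =
        starRingEnd ℂ (ω g h) • (V (g + h)).map (starRingEnd ℂ) := by
      ext i j
      simp [Matrix.map_apply, Matrix.smul_apply, smul_eq_mul, _root_.map_mul]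
    rw [← Matrix.mul_kronecker_mul, ← Matrix.map_mul, hrep, hmapsmul,
      Matrix.smul_kronecker, Matrix.kronecker_smul, smul_smul, hstar,
      inv_mul_cancel₀ (hω0 g h), one_smul]
  -- key conjugation identity
  have key : ∀ g h : G, V g * V h * (V g)ᴴ = (ω g h / ω h g) • V h := by
    intro g h
    have h1 : V (g + h) = (ω h g)⁻¹ • (V h * V g) := by
      rw [hrep h g, add_comm h g, smul_smul, inv_mul_cancel₀ (hω0 h g), one_smul]
    rw [hrep g h, h1, smul_smul, Matrix.smul_mul, Matrix.mul_assoc,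
      (hunitary g).1, Matrix.mul_one, div_eq_mul_inv]
  have hVne : ∀ g : G, V g ≠ 0 := by
    intro g h0
    have h1 := (hunitary g).1
    rw [h0, Matrix.zero_mul] at h1
    have h2 := congrFun (congrFun h1 ⟨0, Nat.pos_of_ne_zero hn0⟩) ⟨0, Nat.pos_of_ne_zero hn0⟩
    simp at h2
  have hcancel : ∀ (a b : ℂ) (M : Matrix (Fin n) (Fin n) ℂ),
      M ≠ 0 → a • M = b • M → a = b := by
    intro a b M hM h
    by_contra hab
    have h1 : (a - b) • M = 0 := by rw [sub_smul, h, sub_self]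
    rcases smul_eq_zero.mp h1 with h' | h'
    · exact hab (sub_eq_zero.mp h')
    · exact hM h'
  -- additivity of the commutator bicharacter in the second slot
  have hadd2 : ∀ y x x' : G,
      ω y (x + x') / ω (x + x') y = (ω y x / ω x y) * (ω y x' / ω x' y) := by
    intro y x x'
    have h1 : V y * (V x * V x') * (V y)ᴴ
        = (ω x x' * (ω y (x + x') / ω (x + x') y)) • V (x + x') := by
      rw [hrep x x', Matrix.mul_smul, Matrix.smul_mul, key, smul_smul]
    have hmid : (V y)ᴴ * (V y * (V x' * (V y)ᴴ)) = V x' * (V y)ᴴ := by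
      rw [← Matrix.mul_assoc, (hunitary y).2, Matrix.one_mul]
    have h2 : V y * (V x * V x') * (V y)ᴴ
        = (ω x x' * ((ω y x / ω x y) * (ω y x' / ω x' y))) • V (x + x') := by
      calc V y * (V x * V x') * (V y)ᴴ
          = V y * (V x * (V x' * (V y)ᴴ)) := by simp only [Matrix.mul_assoc]
        _ = (V y * V x * (V y)ᴴ) * (V y * V x' * (V y)ᴴ) := by
            simp only [Matrix.mul_assoc, hmid]
        _ = ((ω y x / ω x y) • V x) * ((ω y x' / ω x' y) • V x') := by rw [key, key]
        _ = (ω x x' * ((ω y x / ω x y) * (ω y x' / ω x' y))) • V (x + x') := by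
            rw [Matrix.smul_mul, Matrix.mul_smul, hrep, smul_smul, smul_smul]
            congr 1
            ring
    have h3 := hcancel _ _ _ (hVne (x + x')) (h1.symm.trans h2)
    exact mul_left_cancel₀ (hω0 x x') h3
  have hene : ∀ a b : G, ω a b / ω b a ≠ 0 := fun a b =>
    div_ne_zero (hω0 a b) (hω0 b a)
  -- additivity in the first slot
  have hadd1 : ∀ x x' y : G,
      ω (x + x') y / ω y (x + x') = (ω x y / ω y x) * (ω x' y / ω y x') := by
    intro x x' y
    conv_lhs => rw [← inv_div (ω y (x + x')) (ω (x + x') y)]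
    rw [hadd2, mul_inv, inv_div, inv_div]
  have he0 : ∀ y : G, ω y 0 / ω 0 y = 1 := by
    intro y
    have h := hadd2 y 0 0
    rw [add_zero] at h
    exact (mul_left_cancel₀ (hene y 0) (by rw [mul_one]; exact h)).symm
  -- conjugate of the bicharacter
  have hconj : ∀ a b : G, starRingEnd ℂ (ω a b / ω b a) = ω b a / ω a b := by
    intro a b
    rw [map_div₀, hstar, hstar, inv_div_inv]
  -- nontrivial character existence
  have hne1 : ∀ k : G, k ≠ 0 → ∃ h : G, ω h k / ω k h ≠ 1 := by
    intro k hk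
    by_contra hall
    push_neg at hall
    refine hk (hMNC k fun h => ?_)
    have := hall h
    rw [div_eq_one_iff_eq (hω0 k h)] at this
    exact this.symm
  -- character sum
  have hsum : ∀ k : G, k ≠ 0 → ∑ a : G, ω a k / ω k a = 0 := by
    intro k hk
    obtain ⟨h, hh⟩ := hne1 k hk
    have hre : ∑ a : G, ω (a + h) k / ω k (a + h) = ∑ a : G, ω a k / ω k a :=
      Fintype.sum_equiv (Equiv.addRight h) _ _ (fun a => rfl)
    have hre2 : ∑ a : G, ω (a + h) k / ω k (a + h)
        = (ω h k / ω k h) * ∑ a : G, ω a k / ω k a := by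
      rw [Finset.mul_sum]
      exact Finset.sum_congr rfl fun a _ => by rw [hadd1]; ring
    have hE := hre2.symm.trans hre
    by_contra hS0
    exact hh (mul_right_cancel₀ hS0 (by rw [one_mul]; exact hE))
  -- vanishing traces
  have htr : ∀ k : G, k ≠ 0 → (V k).trace = 0 := by
    intro k hk
    obtain ⟨h, hh⟩ := hne1 k hk
    have h1 := congrArg Matrix.trace (key h k)
    rw [Matrix.trace_smul, Matrix.trace_mul_comm (V h * V k) ((V h)ᴴ),
      ← Matrix.mul_assoc, (hunitary h).2, Matrix.one_mul, smul_eq_mul] at h1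
    by_contra h0
    exact hh (mul_right_cancel₀ h0 (by rw [one_mul]; exact h1)).symm
  have htrace : ∀ a b : G, (V a * (V b)ᴴ).trace = if a = b then (n : ℂ) else 0 := by
    intro a b
    by_cases hab : a = b
    · subst hab
      rw [(hunitary a).1, if_pos rfl, Matrix.trace_one]
      simp
    · rw [if_neg hab]
      have h2 : V (a - b) * V b = ω (a - b) b • V a := by
        rw [hrep, sub_add_cancel]
      have h3 : V a = (ω (a - b) b)⁻¹ • (V (a - b) * V b) := by
        rw [h2, smul_smul, inv_mul_cancel₀ (hω0 _ _), one_smul]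
      rw [h3, Matrix.smul_mul, Matrix.mul_assoc, (hunitary b).1, Matrix.mul_one,
        Matrix.trace_smul, htr _ (sub_ne_zero.mpr hab), smul_zero]
  -- constants
  have hcc : ((Real.sqrt n : ℝ) : ℂ)⁻¹ * ((Real.sqrt n : ℝ) : ℂ)⁻¹ = (n : ℂ)⁻¹ := by
    rw [← mul_inv, ← Complex.ofReal_mul, Real.mul_self_sqrt (Nat.cast_nonneg n)]
    rw [Complex.ofReal_natCast]
  have hcre : starRingEnd ℂ (((Real.sqrt n : ℝ) : ℂ)⁻¹) = ((Real.sqrt n : ℝ) : ℂ)⁻¹ := by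
    rw [map_inv₀, Complex.conj_ofReal]
  -- Part 2
  have part2 : ∀ g h : G,
      (((V g).map (starRingEnd ℂ)) ⊗ₖ V g) *ᵥ
          (fun p : Fin n × Fin n =>
            ((Real.sqrt n : ℝ) : ℂ)⁻¹ * starRingEnd ℂ (V h p.1 p.2)) =
        (ω h g / ω g h) •
          fun p : Fin n × Fin n =>
            ((Real.sqrt n : ℝ) : ℂ)⁻¹ * starRingEnd ℂ (V h p.1 p.2) := by
    intro g h
    funext p
    have hup : (V g * V h * (V g)ᴴ) p.1 p.2
        = ∑ l : Fin n, (∑ k : Fin n, V g p.1 k * V h k l) * starRingEnd ℂ (V g p.2 l) := by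
      simp [Matrix.mul_apply, Matrix.conjTranspose_apply, Complex.star_def]
    have hk := congrFun (congrFun (key g h) p.1) p.2
    simp only [Matrix.smul_apply, smul_eq_mul] at hk
    have hk' := congrArg (starRingEnd ℂ) hk
    rw [_root_.map_mul, hconj g h] at hk'
    have hmain : ∑ k : Fin n, ∑ l : Fin n,
        (starRingEnd ℂ (V g p.1 k) * V g p.2 l) *
          (((Real.sqrt n : ℝ) : ℂ)⁻¹ * starRingEnd ℂ (V h k l))
        = ((Real.sqrt n : ℝ) : ℂ)⁻¹ * starRingEnd ℂ ((V g * V h * (V g)ᴴ) p.1 p.2) := by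
      rw [hup, map_sum, Finset.mul_sum, Finset.sum_comm]
      refine Finset.sum_congr rfl fun l _ => ?_
      simp only [_root_.map_mul, map_sum, Complex.conj_conj]
      rw [Finset.sum_mul, Finset.mul_sum]
      exact Finset.sum_congr rfl fun k _ => by ring
    show ∑ q : Fin n × Fin n,
        ((((V g).map (starRingEnd ℂ)) ⊗ₖ V g) p q) *
          (((Real.sqrt n : ℝ) : ℂ)⁻¹ * starRingEnd ℂ (V h q.1 q.2))
      = (ω h g / ω g h) * (((Real.sqrt n : ℝ) : ℂ)⁻¹ * starRingEnd ℂ (V h p.1 p.2))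
    rw [Fintype.sum_prod_type]
    simp only [Matrix.kroneckerMap_apply, Matrix.map_apply]
    rw [hmain, hk']
    ring
  refine ⟨part1, part2, ?_⟩
  -- Part 3
  set c : ℂ := ((Real.sqrt n : ℝ) : ℂ)⁻¹ with hc
  set A : Matrix (Fin n × Fin n) G ℂ :=
    Matrix.of (fun p h => c * starRingEnd ℂ (V h p.1 p.2)) with hA
  set W : Matrix G G ℂ := Matrix.of (fun a h => (n : ℂ)⁻¹ * (ω a h / ω h a)) with hW
  have hAA : Aᴴ * A = 1 := by
    ext h h'
    rw [Matrix.mul_apply]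
    have hterm : ∀ q : Fin n × Fin n,
        Aᴴ h q * A q h' = (n : ℂ)⁻¹ * (V h q.1 q.2 * starRingEnd ℂ (V h' q.1 q.2)) := by
      intro q
      rw [Matrix.conjTranspose_apply, hA]
      simp only [Matrix.of_apply, star_mul', Complex.star_def, _root_.map_mul, hcre,
        Complex.conj_conj]
      rw [← hcc]
      ring
    rw [show (∑ q : Fin n × Fin n, Aᴴ h q * A q h')
        = ∑ q : Fin n × Fin n, (n : ℂ)⁻¹ * (V h q.1 q.2 * starRingEnd ℂ (V h' q.1 q.2))
      from Finset.sum_congr rfl (fun q _ => hterm q)]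
    rw [← Finset.mul_sum, Fintype.sum_prod_type]
    have htt : (V h * (V h')ᴴ).trace
        = ∑ i : Fin n, ∑ j : Fin n, V h i j * starRingEnd ℂ (V h' i j) := by
      simp only [Matrix.trace, Matrix.diag, Matrix.mul_apply,
        Matrix.conjTranspose_apply, Complex.star_def]
    rw [← htt, htrace]
    by_cases hab : h = h'
    · subst hab
      rw [if_pos rfl, Matrix.one_apply_eq, inv_mul_cancel₀ hnC]
    · rw [if_neg hab, Matrix.one_apply_ne hab, mul_zero]
  have hWW : Wᴴ * W = 1 := by
    ext h h'
    rw [Matrix.mul_apply]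
    have hfrac : ∀ a : G,
        (ω h a / ω a h) * (ω a h' / ω h' a) = ω a (h' - h) / ω (h' - h) a := by
      intro a
      have h2 := hadd2 a (h' - h) h
      rw [sub_add_cancel] at h2
      have hone : (ω h a / ω a h) * (ω a h / ω h a) = 1 := by
        rw [div_mul_div_comm, mul_comm (ω a h) (ω h a)]
        exact div_self (mul_ne_zero (hω0 h a) (hω0 a h))
      rw [h2, mul_left_comm, hone, mul_one]
    have hterm : ∀ a : G,
        Wᴴ h a * W a h' = ((n : ℂ)⁻¹ * (n : ℂ)⁻¹) * (ω a (h' - h) / ω (h' - h) a) := by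
      intro a
      rw [Matrix.conjTranspose_apply, hW]
      simp only [Matrix.of_apply, star_mul', Complex.star_def, _root_.map_mul, map_inv₀,
        Complex.conj_natCast, hconj]
      rw [← hfrac a]
      ring
    rw [show (∑ a : G, Wᴴ h a * W a h')
        = ∑ a : G, ((n : ℂ)⁻¹ * (n : ℂ)⁻¹) * (ω a (h' - h) / ω (h' - h) a)
      from Finset.sum_congr rfl (fun a _ => hterm a)]
    rw [← Finset.mul_sum]
    by_cases hab : h = h'
    · subst hab
      simp only [sub_self, he0, Finset.sum_const, Finset.card_univ, nsmul_eq_mul,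
        mul_one]
      rw [← hn, Matrix.one_apply_eq]
      push_cast
      field_simp
    · rw [hsum _ (sub_ne_zero.mpr (Ne.symm hab)), mul_zero, Matrix.one_apply_ne hab]
  have hWWc : W * Wᴴ = 1 := mul_eq_one_comm.mp hWW
  have eqv : (Fin n × Fin n) ≃ G := Fintype.equivOfCardEq (by
    rw [Fintype.card_prod, Fintype.card_fin, ← hn, pow_two])
  have hAAc : A * Aᴴ = 1 := (Matrix.mul_eq_one_comm_of_equiv eqv).mpr hAA
  have hRA : ∀ g : G, (((V g).map (starRingEnd ℂ)) ⊗ₖ V g) * A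
      = A * Matrix.diagonal (fun h => ω h g / ω g h) := by
    intro g
    ext p h
    have h3 : (∑ q : Fin n × Fin n,
        (((V g).map (starRingEnd ℂ)) ⊗ₖ V g) p q * (c * starRingEnd ℂ (V h q.1 q.2)))
        = (ω h g / ω g h) * (c * starRingEnd ℂ (V h p.1 p.2)) := by
      have h4 := congrFun (part2 g h) p
      simp only [Matrix.mulVec, dotProduct, Pi.smul_apply, smul_eq_mul] at h4
      exact h4
    rw [Matrix.mul_apply, Matrix.mul_diagonal]
    simp only [hA, Matrix.of_apply]
    rw [h3]
    ring
  have hPW : ∀ g : G, (Matrix.of fun a b : G => if a = b + g then (1 : ℂ) else 0) * W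
      = W * Matrix.diagonal (fun h => ω h g / ω g h) := by
    intro g
    ext a h
    rw [Matrix.mul_apply, Matrix.mul_diagonal]
    rw [Finset.sum_eq_single (a - g)]
    · rw [Matrix.of_apply, if_pos (by rw [sub_add_cancel]), one_mul, hW]
      simp only [Matrix.of_apply]
      have h2 := hadd1 (a - g) g h
      rw [sub_add_cancel] at h2
      have hone : (ω g h / ω h g) * (ω h g / ω g h) = 1 := by
        rw [div_mul_div_comm, mul_comm (ω h g) (ω g h)]
        exact div_self (mul_ne_zero (hω0 g h) (hω0 h g))
      calc (n : ℂ)⁻¹ * (ω (a - g) h / ω h (a - g))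
          = (n : ℂ)⁻¹ * ((ω (a - g) h / ω h (a - g)) * ((ω g h / ω h g) * (ω h g / ω g h))) := by
            rw [hone, mul_one]
        _ = ((n : ℂ)⁻¹ * ((ω (a - g) h / ω h (a - g)) * (ω g h / ω h g))) * (ω h g / ω g h) := by
            ring
        _ = ((n : ℂ)⁻¹ * (ω a h / ω h a)) * (ω h g / ω g h) := by rw [← h2]
    · intro b _ hb
      rw [Matrix.of_apply, if_neg, zero_mul]
      intro hco
      exact hb (by rw [hco, add_sub_cancel_right])
    · intro hmem
      exact absurd (Finset.mem_univ _) hmem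
  refine ⟨A * Wᴴ, ?_, ?_, ?_⟩
  · rw [Matrix.conjTranspose_mul, Matrix.conjTranspose_conjTranspose,
      Matrix.mul_assoc A Wᴴ (W * Aᴴ), ← Matrix.mul_assoc Wᴴ W Aᴴ, hWW,
      Matrix.one_mul, hAAc]
  · rw [Matrix.conjTranspose_mul, Matrix.conjTranspose_conjTranspose,
      Matrix.mul_assoc W Aᴴ (A * Wᴴ), ← Matrix.mul_assoc Aᴴ A Wᴴ, hAA,
      Matrix.one_mul, hWWc]
  · intro g
    symm
    calc A * Wᴴ * (Matrix.of fun a b : G => if a = b + g then (1 : ℂ) else 0) * (A * Wᴴ)ᴴ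
        = A * Wᴴ * (Matrix.of fun a b : G => if a = b + g then (1 : ℂ) else 0) * (W * Aᴴ) := by
          rw [Matrix.conjTranspose_mul, Matrix.conjTranspose_conjTranspose]
      _ = A * (Wᴴ * ((Matrix.of fun a b : G => if a = b + g then (1 : ℂ) else 0) * W)) * Aᴴ := by
          simp only [Matrix.mul_assoc]
      _ = A * (Wᴴ * (W * Matrix.diagonal (fun h => ω h g / ω g h))) * Aᴴ := by rw [hPW]
      _ = A * Matrix.diagonal (fun h => ω h g / ω g h) * Aᴴ := by
          rw [← Matrix.mul_assoc Wᴴ W _, hWW, Matrix.one_mul]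
      _ = (((V g).map (starRingEnd ℂ)) ⊗ₖ V g) * (A * Aᴴ) := by
          rw [← hRA g, Matrix.mul_assoc]
      _ = ((V g).map (starRingEnd ℂ)) ⊗ₖ V g := by rw [hAAc, Matrix.mul_one]
end
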